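/- arXiv:2502.08740 — 3 statements merged into one kernel-verified Lean document; each statement's English description precedes it below -/
import Mathlib

section
/- Let T > 0, c_M > 0, and let σ_A, σ_S : (0,∞) → [0,∞) be measurable. Suppose ω, k ∈ ℂ, δT ∈ ℂ, and a measurable δf : ℝ³∖{0} → ℂ satisfy the plane-wave radiative transfer system: (i) −i c_M ω δT = −∫_{ℝ³} (2/(2π)³) |p| [σ_A(|p|)(δf_BB(|p|) − δf(p)) + σ_S(|p|)(δf̄(|p|) − δf(p))] d³p, and (ii) for a.e. p, −i(ω − k p¹/|p|) δf(p) = σ_A(|p|)(δf_BB(|p|) − δf(p)) + σ_S(|p|)(δf̄(|p|) − δf(p)); assume the weighted integrals ∫ w(|p|)|δf(p)|² d³p, ∫ w(|p|)σ_A(|p|)|δf_BB(|p|) − δf(p)|² d³p, ∫ w(|p|)σ_S(|p|)|δf̄(|p|) − δf(p)|² d³p and the integral in (i) are finite, and that c_M|δT|²/T² + ∫ w(|p|)|δf(p)|² d³p > 0. Then Im ω ≤ |Im k|. -/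
/-!
Statement 0 (Theorem 2 of the paper): covariant stability of the linearized
radiative transfer equations in plane-wave (Fourier) form:
any solution of the plane-wave system satisfies `Im ω ≤ |Im k|`.
-/

noncomputable section
open MeasureTheory Real Set

/-- Physical momentum space `ℝ³`. -/
abbrev R3 : Type := EuclideanSpace ℝ (Fin 3)

/-- Black-body occupation number `f_BB(q) = 1/(e^{q/T} - 1)`. -/
def fBB (T q : ℝ) : ℝ := 1 / (Real.exp (q / T) - 1)

/-- Entropy weight `w(q) = 2 / ((2π)³ f_BB(q)(1 + f_BB(q)))`. -/
def wgt (T q : ℝ) : ℝ := 2 / ((2 * Real.pi) ^ 3 * (fBB T q * (1 + fBB T q)))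

/-- Perturbation of the black-body distribution,
`δf_BB(q) = f_BB(q)(1 + f_BB(q)) q δT / T²`. -/
def δfBB (T : ℝ) (δT : ℂ) (q : ℝ) : ℂ :=
  ((fBB T q * (1 + fBB T q) * q / T ^ 2 : ℝ) : ℂ) * δT

/-- Average of `δf` over the unit sphere of directions at energy `q`:
`δf̄(q) = (1/(4π)) ∫_{S²} δf(qΩ) dσ(Ω)`. -/
def sphAvg (δf : R3 → ℂ) (q : ℝ) : ℂ :=
  (4 * Real.pi : ℝ)⁻¹ •
    ∫ Ω : Metric.sphere (0 : R3) 1, δf (q • (Ω : R3)) ∂((volume : Measure R3).toSphere)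

/-- The collision term
`σ_A(|p|)(δf_BB(|p|) − δf(p)) + σ_S(|p|)(δf̄(|p|) − δf(p))`. -/
def coll (σA σS : ℝ → ℝ) (T : ℝ) (δT : ℂ) (δf : R3 → ℂ) (p : R3) : ℂ :=
  (σA ‖p‖ : ℝ) * (δfBB T δT ‖p‖ - δf p) + (σS ‖p‖ : ℝ) * (sphAvg δf ‖p‖ - δf p)

/- ## Auxiliary lemmas -/

lemma fBB_pos {T q : ℝ} (hT : 0 < T) (hq : 0 < q) : 0 < fBB T q := by
  have : (1:ℝ) < Real.exp (q / T) := by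
    rw [← Real.exp_zero]; exact Real.exp_lt_exp.2 (by positivity)
  exact div_pos one_pos (by linarith)

lemma wgt_pos {T q : ℝ} (hT : 0 < T) (hq : 0 < q) : 0 < wgt T q := by
  have h := fBB_pos hT hq
  have hπ := Real.pi_pos
  unfold wgt; positivity

lemma wgt_zero (T : ℝ) : wgt T 0 = 0 := by
  unfold wgt fBB
  simp

lemma wgt_nonneg {T : ℝ} (hT : 0 < T) (q : ℝ) (hq : 0 ≤ q) : 0 ≤ wgt T q := by
  rcases hq.eq_or_lt with h | h
  · rw [← h, wgt_zero]
  · exact (wgt_pos hT h).le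

lemma mul_conj_self (z : ℂ) : z * (starRingEnd ℂ) z = ((‖z‖ ^ 2 : ℝ) : ℂ) := by
  rw [Complex.mul_conj]
  norm_cast
  rw [Complex.normSq_eq_norm_sq]

lemma ofReal_norm_sq (z : ℂ) : ((‖z‖ : ℝ) : ℂ) ^ 2 = z * (starRingEnd ℂ) z := by
  rw [mul_conj_self]; norm_cast

lemma Integrable.complex_ofReal {α : Type*} [MeasurableSpace α] {μ : MeasureTheory.Measure α}
    {f : α → ℝ} (hf : MeasureTheory.Integrable f μ) :
    MeasureTheory.Integrable (fun x => ((f x : ℝ) : ℂ)) μ := hf.ofReal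

lemma wgt_mul_conj_δfBB {T : ℝ} (hT : 0 < T) {q : ℝ} (hq : 0 < q) (δT : ℂ) :
    ((wgt T q : ℝ) : ℂ) * (starRingEnd ℂ) (δfBB T δT q)
      = ((2 / (2 * Real.pi) ^ 3 * q : ℝ) : ℂ) * (starRingEnd ℂ) δT / ((T : ℂ)) ^ 2 := by
  have hX : fBB T q * (1 + fBB T q) ≠ 0 := by
    have h := fBB_pos hT hq; positivity
  have hreal : wgt T q * (fBB T q * (1 + fBB T q) * q / T ^ 2)
      = 2 / (2 * Real.pi) ^ 3 * q / T ^ 2 := by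
    unfold wgt
    have hπ : (2 * Real.pi) ^ 3 ≠ 0 := by have := Real.pi_pos; positivity
    have h0 := fBB_pos hT hq
    field_simp
  unfold δfBB
  rw [map_mul, Complex.conj_ofReal]
  calc ((wgt T q : ℝ) : ℂ) * ((( fBB T q * (1 + fBB T q) * q / T ^ 2 : ℝ) : ℂ) * (starRingEnd ℂ) δT)
      = (((wgt T q * (fBB T q * (1 + fBB T q) * q / T ^ 2) : ℝ)) : ℂ) * (starRingEnd ℂ) δT := by
        push_cast; ring
    _ = _ := by
        rw [hreal]
        have hT0 : (T : ℂ) ≠ 0 := by exact_mod_cast hT.ne'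
        push_cast
        field_simp

lemma abs_coord_le_norm (p : R3) : |p 0| ≤ ‖p‖ := by
  have h1 : (p 0) = inner ℝ (EuclideanSpace.single (0 : Fin 3) (1:ℝ)) p := by
    rw [EuclideanSpace.inner_single_left]
    simp
  rw [h1]
  calc |inner ℝ (EuclideanSpace.single (0 : Fin 3) (1:ℝ)) p|
      ≤ ‖EuclideanSpace.single (0 : Fin 3) (1:ℝ)‖ * ‖p‖ := abs_real_inner_le_norm _ _
    _ = ‖p‖ := by rw [EuclideanSpace.norm_single]; simp

lemma abs_coord_div_norm_le_one (p : R3) : |p 0 / ‖p‖| ≤ 1 := by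
  rcases eq_or_ne p 0 with h | h
  · simp [h]
  · have hn : 0 < ‖p‖ := norm_pos_iff.2 h
    rw [abs_div, abs_of_pos hn, div_le_one hn]
    exact abs_coord_le_norm p

lemma measurable_wgt (T : ℝ) : Measurable (wgt T) := by
  unfold wgt fBB
  fun_prop

lemma measurable_coord : Measurable (fun p : R3 => p 0) := by
  fun_prop

lemma toSphere_univ_R3 : ((volume : Measure R3).toSphere univ).toReal = 4 * Real.pi := by
  rw [Measure.toSphere_apply_univ, EuclideanSpace.volume_ball]
  have h3 : (Fintype.card (Fin 3) : ℝ) = 3 := by simp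
  have hG : Real.Gamma ((Fintype.card (Fin 3) : ℝ) / 2 + 1) = 3 / 4 * Real.sqrt Real.pi := by
    rw [h3]
    have : (3:ℝ)/2 + 1 = (1/2 + 1) + 1 := by ring
    rw [this, Real.Gamma_add_one (by norm_num), Real.Gamma_add_one (by norm_num),
      Real.Gamma_one_half_eq]
    ring
  have hπ : 0 < Real.pi := Real.pi_pos
  rw [hG]
  have hd : Module.finrank ℝ R3 = 3 := finrank_euclideanSpace_fin
  rw [hd]
  have hcard : Fintype.card (Fin 3) = 3 := by simp
  rw [hcard]
  have hsq : Real.sqrt Real.pi ^ 3 / (3 / 4 * Real.sqrt Real.pi) = 4 / 3 * Real.pi := by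
    have : Real.sqrt Real.pi ^ 3 = Real.pi * Real.sqrt Real.pi := by
      rw [pow_succ, Real.sq_sqrt hπ.le]
    rw [this]
    field_simp
  rw [hsq]
  rw [ENNReal.toReal_mul, ENNReal.toReal_mul]
  simp [ENNReal.toReal_ofReal (by positivity : (0:ℝ) ≤ 4/3*Real.pi)]
  ring

/-- Key spherical-average cancellation: the integral of a radial function times
`δf̄(|p|) − δf(p)` vanishes. -/
lemma integral_radial_avg_sub (G : ℝ → ℂ) (δf : R3 → ℂ)
    (hZ : Integrable (fun p : R3 => G ‖p‖ * (sphAvg δf ‖p‖ - δf p))) :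
    ∫ p : R3, G ‖p‖ * (sphAvg δf ‖p‖ - δf p) = 0 := by
  set μ : Measure R3 := volume with hμ
  set Z : R3 → ℂ := fun p => G ‖p‖ * (sphAvg δf ‖p‖ - δf p) with hZdef
  set h : Metric.sphere (0:R3) 1 × Ioi (0:ℝ) → ℂ :=
    fun x => G (x.2 : ℝ) * (sphAvg δf (x.2 : ℝ) - δf ((x.2 : ℝ) • (x.1 : R3))) with hhdef
  have hs : MeasurableSet ({0}ᶜ : Set R3) := (measurableSet_singleton _).compl
  have hcomp : (fun x : ({0}ᶜ : Set R3) => Z x.1) = h ∘ (homeomorphUnitSphereProd R3) := by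
    funext x
    simp only [hhdef, Function.comp_apply, homeomorphUnitSphereProd_apply_fst_coe,
      homeomorphUnitSphereProd_apply_snd_coe, hZdef]
    rw [smul_inv_smul₀ (norm_ne_zero_iff.2 x.2)]
  have hsub : Integrable (fun x : ({0}ᶜ : Set R3) => Z x.1) (μ.comap (↑)) := by
    have : Integrable (Z ∘ (Subtype.val : ({0}ᶜ : Set R3) → R3)) (μ.comap ((↑) : ({0}ᶜ : Set R3) → R3)) := by
      rw [← (MeasurableEmbedding.subtype_coe hs).integrable_map_iff,
        map_comap_subtype_coe hs]
      exact hZ.restrict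
    exact this
  have hprodInt : Integrable h (μ.toSphere.prod (.volumeIoiPow (Module.finrank ℝ R3 - 1))) := by
    rw [← μ.measurePreserving_homeomorphUnitSphereProd.integrable_comp_emb
      (Homeomorph.measurableEmbedding _)]
    rw [← hcomp]; exact hsub
  have key : ∫ p, Z p ∂μ
      = ∫ x, h x ∂(μ.toSphere.prod (.volumeIoiPow (Module.finrank ℝ R3 - 1))) := by
    have h1 : ∫ p, Z p ∂μ = ∫ p in ({0}ᶜ : Set R3), Z p ∂μ := by
      rw [MeasureTheory.restrict_compl_singleton]
    rw [h1, ← MeasureTheory.integral_subtype_comap hs Z]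
    calc ∫ x : ({0}ᶜ : Set R3), Z x.1 ∂(μ.comap (↑))
        = ∫ x : ({0}ᶜ : Set R3), h ((homeomorphUnitSphereProd R3) x) ∂(μ.comap (↑)) := by
          rw [show (fun x : ({0}ᶜ : Set R3) => Z x.1)
            = fun x => h ((homeomorphUnitSphereProd R3) x) from hcomp]
      _ = _ := μ.measurePreserving_homeomorphUnitSphereProd.integral_comp
          (Homeomorph.measurableEmbedding _) h
  rw [key, MeasureTheory.integral_prod_symm h hprodInt]
  have h0 : ∀ᵐ r ∂(Measure.volumeIoiPow (Module.finrank ℝ R3 - 1)),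
      (∫ Ω, h (Ω, r) ∂μ.toSphere) = 0 := by
    filter_upwards [hprodInt.prod_left_ae] with r hr
    by_cases hG : G (r : ℝ) = 0
    · simp [hhdef, hG]
    · have hint2 : Integrable (fun Ω : Metric.sphere (0:R3) 1 =>
          sphAvg δf (r : ℝ) - δf ((r : ℝ) • (Ω : R3))) μ.toSphere := by
        have h2 := hr.const_mul (G (r : ℝ))⁻¹
        simpa [hhdef, ← mul_assoc, inv_mul_cancel₀ hG] using h2
      have hint3 : Integrable (fun Ω : Metric.sphere (0:R3) 1 =>
          δf ((r : ℝ) • (Ω : R3))) μ.toSphere := by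
        have heq : (fun Ω : Metric.sphere (0:R3) 1 => δf ((r : ℝ) • (Ω : R3)))
            = (fun _ => sphAvg δf (r : ℝ)) - (fun Ω : Metric.sphere (0:R3) 1 =>
              sphAvg δf (r : ℝ) - δf ((r : ℝ) • (Ω : R3))) := by
          funext Ω; simp
        rw [heq]
        exact (integrable_const (sphAvg δf (r : ℝ))).sub hint2
      have hexp : (fun Ω : Metric.sphere (0:R3) 1 => h (Ω, r))
          = fun Ω : Metric.sphere (0:R3) 1 =>
            G (r : ℝ) * (sphAvg δf (r : ℝ) - δf ((r : ℝ) • (Ω : R3))) := rfl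
      rw [hexp, integral_const_mul,
        integral_sub (integrable_const _) hint3, integral_const]
      rw [show sphAvg δf (r : ℝ) = (4 * Real.pi : ℝ)⁻¹ •
        ∫ Ω : Metric.sphere (0:R3) 1, δf ((r:ℝ) • (Ω : R3)) ∂μ.toSphere from rfl]
      rw [measureReal_def, toSphere_univ_R3]
      have h4π : (4 * Real.pi : ℝ) ≠ 0 := by positivity
      rw [smul_comm, inv_smul_smul₀ h4π]
      simp
  rw [integral_congr_ae h0, integral_zero]

theorem radiative_transfer_covariant_stability
    (T cM : ℝ) (hT : 0 < T) (hcM : 0 < cM)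
    (σA σS : ℝ → ℝ) (hσAm : Measurable σA) (hσSm : Measurable σS)
    (hσA : ∀ q ∈ Ioi (0 : ℝ), 0 ≤ σA q) (hσS : ∀ q ∈ Ioi (0 : ℝ), 0 ≤ σS q)
    (ω k : ℂ) (δT : ℂ) (δf : R3 → ℂ) (hδf : Measurable δf)
    -- equation (i): energy conservation
    (heq1 : -Complex.I * cM * ω * δT =
      -∫ p : R3, ((2 / (2 * Real.pi) ^ 3 * ‖p‖ : ℝ) : ℂ) * coll σA σS T δT δf p)
    -- equation (ii): Boltzmann equation, for a.e. p
    (heq2 : ∀ᵐ p : R3, -Complex.I * (ω - k * ((p 0 / ‖p‖ : ℝ) : ℂ)) * δf p =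
      coll σA σS T δT δf p)
    -- finiteness assumptions
    (hInt1 : Integrable (fun p : R3 => wgt T ‖p‖ * ‖δf p‖ ^ 2))
    (hInt2 : Integrable (fun p : R3 => wgt T ‖p‖ * σA ‖p‖ * ‖δfBB T δT ‖p‖ - δf p‖ ^ 2))
    (hInt3 : Integrable (fun p : R3 => wgt T ‖p‖ * σS ‖p‖ * ‖sphAvg δf ‖p‖ - δf p‖ ^ 2))
    (hInt4 : Integrable (fun p : R3 =>
      ((2 / (2 * Real.pi) ^ 3 * ‖p‖ : ℝ) : ℂ) * coll σA σS T δT δf p))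
    -- nondegeneracy
    (hN : 0 < cM * ‖δT‖ ^ 2 / T ^ 2 + ∫ p : R3, wgt T ‖p‖ * ‖δf p‖ ^ 2) :
    ω.im ≤ |k.im| := by
  classical
  set C : R3 → ℂ := coll σA σS T δT δf with hC
  set s : ℝ := ∫ p : R3, wgt T ‖p‖ * ‖δf p‖ ^ 2 with hsdef
  set A : ℝ := ∫ p : R3, (p 0 / ‖p‖) * (wgt T ‖p‖ * ‖δf p‖ ^ 2) with hAdef
  set t : ℝ := ‖δT‖ ^ 2 / T ^ 2 with htdef
  have hwmeas : Measurable fun p : R3 => wgt T ‖p‖ := (measurable_wgt T).comp measurable_norm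
  have hwfmeas : Measurable fun p : R3 => wgt T ‖p‖ * ‖δf p‖ ^ 2 :=
    hwmeas.mul (hδf.norm.pow_const 2)
  have hwfnn : ∀ p : R3, 0 ≤ wgt T ‖p‖ * ‖δf p‖ ^ 2 := fun p =>
    mul_nonneg (wgt_nonneg hT _ (norm_nonneg p)) (by positivity)
  have hptbd : ∀ p : R3, ‖(p 0 / ‖p‖) * (wgt T ‖p‖ * ‖δf p‖ ^ 2)‖ ≤ wgt T ‖p‖ * ‖δf p‖ ^ 2 := by
    intro p
    rw [Real.norm_eq_abs, abs_mul]
    calc |p 0 / ‖p‖| * |wgt T ‖p‖ * ‖δf p‖ ^ 2|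
        ≤ 1 * |wgt T ‖p‖ * ‖δf p‖ ^ 2| := by
          gcongr; exact abs_coord_div_norm_le_one p
      _ = wgt T ‖p‖ * ‖δf p‖ ^ 2 := by rw [one_mul, abs_of_nonneg (hwfnn p)]
  have hμwInt : Integrable (fun p : R3 => (p 0 / ‖p‖) * (wgt T ‖p‖ * ‖δf p‖ ^ 2)) := by
    refine hInt1.mono' ?_ (Filter.Eventually.of_forall hptbd)
    exact ((measurable_coord.div measurable_norm).mul hwfmeas).aestronglyMeasurable
  -- the quantity I_f
  set g1 : R3 → ℂ := fun p => -Complex.I * (ω - k * ((p 0 / ‖p‖ : ℝ) : ℂ)) *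
    ((wgt T ‖p‖ * ‖δf p‖ ^ 2 : ℝ) : ℂ) with hg1def
  have hg1eq : ∀ p : R3, g1 p = -Complex.I * ω * ((wgt T ‖p‖ * ‖δf p‖ ^ 2 : ℝ) : ℂ)
      + Complex.I * k * (((p 0 / ‖p‖) * (wgt T ‖p‖ * ‖δf p‖ ^ 2) : ℝ) : ℂ) := by
    intro p; simp only [hg1def]; push_cast; ring
  have hg1Int : Integrable g1 := by
    rw [funext hg1eq]
    exact ((Integrable.complex_ofReal hInt1).const_mul _).add
      ((Integrable.complex_ofReal hμwInt).const_mul _)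
  have hg1val : ∫ p, g1 p = -Complex.I * ω * (s : ℂ) + Complex.I * k * (A : ℂ) := by
    simp only [hg1eq]
    rw [integral_add ((Integrable.complex_ofReal hInt1).const_mul (-Complex.I * ω))
      ((Integrable.complex_ofReal hμwInt).const_mul (Complex.I * k)),
      integral_const_mul, integral_const_mul, integral_complex_ofReal, integral_complex_ofReal]
  have haef : (fun p : R3 => ((wgt T ‖p‖ : ℝ) : ℂ) * C p * (starRingEnd ℂ) (δf p))
      =ᵐ[(volume : Measure R3)] g1 := by
    filter_upwards [heq2] with p hp
    rw [← hp, hg1def]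
    calc ((wgt T ‖p‖ : ℝ) : ℂ) * (-Complex.I * (ω - k * ((p 0 / ‖p‖ : ℝ) : ℂ)) * δf p)
          * (starRingEnd ℂ) (δf p)
        = -Complex.I * (ω - k * ((p 0 / ‖p‖ : ℝ) : ℂ)) *
            (((wgt T ‖p‖ : ℝ) : ℂ) * (δf p * (starRingEnd ℂ) (δf p))) := by ring
      _ = _ := by rw [mul_conj_self]; push_cast; ring
  have hIfInt : Integrable (fun p : R3 => ((wgt T ‖p‖ : ℝ) : ℂ) * C p * (starRingEnd ℂ) (δf p)) :=
    hg1Int.congr haef.symm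
  have hIf : ∫ p : R3, ((wgt T ‖p‖ : ℝ) : ℂ) * C p * (starRingEnd ℂ) (δf p)
      = -Complex.I * ω * (s : ℂ) + Complex.I * k * (A : ℂ) := by
    rw [integral_congr_ae haef, hg1val]
  -- the quantity I_BB
  have hae0 : ∀ᵐ p : R3, p ≠ (0 : R3) := by
    have h := (Set.countable_singleton (0:R3)).ae_notMem (volume : Measure R3)
    filter_upwards [h] with p hp
    simpa using hp
  have haeBB : (fun p : R3 => ((wgt T ‖p‖ : ℝ) : ℂ) * C p * (starRingEnd ℂ) (δfBB T δT ‖p‖))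
      =ᵐ[(volume : Measure R3)] fun p => ((starRingEnd ℂ) δT / (T : ℂ) ^ 2) *
        (((2 / (2 * Real.pi) ^ 3 * ‖p‖ : ℝ) : ℂ) * C p) := by
    filter_upwards [hae0] with p hp
    have hq : 0 < ‖p‖ := norm_pos_iff.2 hp
    have hkey := wgt_mul_conj_δfBB hT hq δT
    calc ((wgt T ‖p‖ : ℝ) : ℂ) * C p * (starRingEnd ℂ) (δfBB T δT ‖p‖)
        = (((wgt T ‖p‖ : ℝ) : ℂ) * (starRingEnd ℂ) (δfBB T δT ‖p‖)) * C p := by ring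
      _ = (((2 / (2 * Real.pi) ^ 3 * ‖p‖ : ℝ) : ℂ) * (starRingEnd ℂ) δT / (T : ℂ) ^ 2) * C p := by
          rw [hkey]
      _ = _ := by ring
  have hIBBInt : Integrable
      (fun p : R3 => ((wgt T ‖p‖ : ℝ) : ℂ) * C p * (starRingEnd ℂ) (δfBB T δT ‖p‖)) :=
    (hInt4.const_mul _).congr haeBB.symm
  have hI4 : (∫ p : R3, ((2 / (2 * Real.pi) ^ 3 * ‖p‖ : ℝ) : ℂ) * C p)
      = Complex.I * cM * ω * δT := by
    linear_combination heq1
  have hIBB : ∫ p : R3, ((wgt T ‖p‖ : ℝ) : ℂ) * C p * (starRingEnd ℂ) (δfBB T δT ‖p‖)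
      = Complex.I * cM * ω * ((t : ℝ) : ℂ) := by
    rw [integral_congr_ae haeBB, integral_const_mul, hI4]
    have hT0 : (T : ℂ) ≠ 0 := by exact_mod_cast hT.ne'
    have hm := mul_conj_self δT
    have hcast : ((t : ℝ) : ℂ) = ((‖δT‖ ^ 2 : ℝ) : ℂ) / ((T : ℂ)) ^ 2 := by
      rw [htdef]; push_cast; ring
    rw [hcast]
    have hmm : (starRingEnd ℂ) δT * (Complex.I * (cM : ℂ) * ω * δT)
        = Complex.I * (cM : ℂ) * ω * ((‖δT‖ ^ 2 : ℝ) : ℂ) := by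
      linear_combination (Complex.I * (cM : ℂ) * ω) * hm
    calc (starRingEnd ℂ) δT / (T : ℂ) ^ 2 * (Complex.I * (cM : ℂ) * ω * δT)
        = ((starRingEnd ℂ) δT * (Complex.I * (cM : ℂ) * ω * δT)) / (T : ℂ) ^ 2 := by ring
      _ = (Complex.I * (cM : ℂ) * ω * ((‖δT‖ ^ 2 : ℝ) : ℂ)) / (T : ℂ) ^ 2 := by rw [hmm]
      _ = Complex.I * (cM : ℂ) * ω * (((‖δT‖ ^ 2 : ℝ) : ℂ) / (T : ℂ) ^ 2) := by ring
  -- decomposition of the entropy production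
  set G3 : ℝ → ℂ := fun q => ((wgt T q * σS q : ℝ) : ℂ) *
    (starRingEnd ℂ) (δfBB T δT q - sphAvg δf q) with hG3def
  set t1 : R3 → ℂ := fun p => ((wgt T ‖p‖ * σA ‖p‖ * ‖δfBB T δT ‖p‖ - δf p‖ ^ 2 : ℝ) : ℂ)
    with ht1def
  set t2 : R3 → ℂ := fun p => ((wgt T ‖p‖ * σS ‖p‖ * ‖sphAvg δf ‖p‖ - δf p‖ ^ 2 : ℝ) : ℂ)
    with ht2def
  have hdecomp : ∀ p : R3,
      ((wgt T ‖p‖ : ℝ) : ℂ) * C p * (starRingEnd ℂ) (δfBB T δT ‖p‖)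
        - ((wgt T ‖p‖ : ℝ) : ℂ) * C p * (starRingEnd ℂ) (δf p)
      = t1 p + t2 p + G3 ‖p‖ * (sphAvg δf ‖p‖ - δf p) := by
    intro p
    have e1 := mul_conj_self (δfBB T δT ‖p‖ - δf p)
    have e2 := mul_conj_self (sphAvg δf ‖p‖ - δf p)
    simp only [hC, coll, ht1def, ht2def, hG3def]
    push_cast
    rw [ofReal_norm_sq, ofReal_norm_sq]
    simp only [map_sub]
    ring
  have ht1Int : Integrable t1 := Integrable.complex_ofReal hInt2
  have ht2Int : Integrable t2 := Integrable.complex_ofReal hInt3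
  have ht3Int : Integrable (fun p : R3 => G3 ‖p‖ * (sphAvg δf ‖p‖ - δf p)) := by
    have hfun : (fun p : R3 => G3 ‖p‖ * (sphAvg δf ‖p‖ - δf p))
        = fun p : R3 => (((wgt T ‖p‖ : ℝ) : ℂ) * C p * (starRingEnd ℂ) (δfBB T δT ‖p‖)
          - ((wgt T ‖p‖ : ℝ) : ℂ) * C p * (starRingEnd ℂ) (δf p)) - t1 p - t2 p := by
      funext p
      rw [hdecomp p]; ring
    rw [hfun]
    exact ((hIBBInt.sub hIfInt).sub ht1Int).sub ht2Int
  have ht3zero : ∫ p : R3, G3 ‖p‖ * (sphAvg δf ‖p‖ - δf p) = 0 :=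
    integral_radial_avg_sub G3 δf ht3Int
  set DA : ℝ := ∫ p : R3, wgt T ‖p‖ * σA ‖p‖ * ‖δfBB T δT ‖p‖ - δf p‖ ^ 2 with hDAdef
  set DS : ℝ := ∫ p : R3, wgt T ‖p‖ * σS ‖p‖ * ‖sphAvg δf ‖p‖ - δf p‖ ^ 2 with hDSdef
  have hDA : 0 ≤ DA := by
    rw [hDAdef]
    refine integral_nonneg fun p => ?_
    rcases (norm_nonneg p).eq_or_lt with h | h
    · rw [← h, wgt_zero]; simp
    · exact mul_nonneg (mul_nonneg (wgt_pos hT h).le (hσA _ h)) (by positivity)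
  have hDS : 0 ≤ DS := by
    rw [hDSdef]
    refine integral_nonneg fun p => ?_
    rcases (norm_nonneg p).eq_or_lt with h | h
    · rw [← h, wgt_zero]; simp
    · exact mul_nonneg (mul_nonneg (wgt_pos hT h).le (hσS _ h)) (by positivity)
  -- the main complex identity
  have hmain : Complex.I * cM * ω * ((t : ℝ) : ℂ)
      - (-Complex.I * ω * (s : ℂ) + Complex.I * k * (A : ℂ))
      = ((DA : ℝ) : ℂ) + ((DS : ℝ) : ℂ) := by
    have hsplit : ∫ p : R3, (((wgt T ‖p‖ : ℝ) : ℂ) * C p * (starRingEnd ℂ) (δfBB T δT ‖p‖)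
        - ((wgt T ‖p‖ : ℝ) : ℂ) * C p * (starRingEnd ℂ) (δf p))
        = ((DA : ℝ) : ℂ) + ((DS : ℝ) : ℂ) := by
      rw [show (∫ p : R3, (((wgt T ‖p‖ : ℝ) : ℂ) * C p * (starRingEnd ℂ) (δfBB T δT ‖p‖)
          - ((wgt T ‖p‖ : ℝ) : ℂ) * C p * (starRingEnd ℂ) (δf p)))
          = ∫ p : R3, (t1 p + t2 p) + G3 ‖p‖ * (sphAvg δf ‖p‖ - δf p) from
        integral_congr_ae (Filter.Eventually.of_forall fun p => hdecomp p)]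
      rw [integral_add (f := fun p : R3 => t1 p + t2 p)
        (g := fun p : R3 => G3 ‖p‖ * (sphAvg δf ‖p‖ - δf p)) (ht1Int.add ht2Int) ht3Int,
        ht3zero, add_zero, integral_add ht1Int ht2Int]
      have hDAc : ∫ p : R3, t1 p = ((DA : ℝ) : ℂ) := by
        simp only [ht1def]
        rw [integral_complex_ofReal, hDAdef]
      have hDSc : ∫ p : R3, t2 p = ((DS : ℝ) : ℂ) := by
        simp only [ht2def]
        rw [integral_complex_ofReal, hDSdef]
      rw [hDAc, hDSc]
    rw [integral_sub hIBBInt hIfInt, hIBB, hIf] at hsplit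
    exact hsplit
  -- take real parts
  have hre : -(cM * ω.im * t + ω.im * s - k.im * A) = DA + DS := by
    have h := congrArg Complex.re hmain
    simp only [Complex.add_re, Complex.sub_re, Complex.mul_re, Complex.mul_im,
      Complex.I_re, Complex.I_im, Complex.ofReal_re, Complex.ofReal_im,
      Complex.add_im, Complex.sub_im, Complex.neg_re, Complex.neg_im] at h
    ring_nf at h ⊢
    linarith [h]
  have htnn : 0 ≤ t := by rw [htdef]; positivity
  have hAle : |A| ≤ s := by
    rw [hAdef, hsdef]
    calc |∫ p : R3, (p 0 / ‖p‖) * (wgt T ‖p‖ * ‖δf p‖ ^ 2)|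
        ≤ ∫ p : R3, ‖(p 0 / ‖p‖) * (wgt T ‖p‖ * ‖δf p‖ ^ 2)‖ := by
          rw [← Real.norm_eq_abs]
          exact norm_integral_le_integral_norm _
      _ ≤ ∫ p : R3, wgt T ‖p‖ * ‖δf p‖ ^ 2 :=
          integral_mono hμwInt.norm hInt1 hptbd
  have hkA : k.im * A ≤ |k.im| * s := by
    calc k.im * A ≤ |k.im * A| := le_abs_self _
      _ = |k.im| * |A| := abs_mul _ _
      _ ≤ |k.im| * s := by
        exact mul_le_mul_of_nonneg_left hAle (abs_nonneg _)
  have hNval : cM * ‖δT‖ ^ 2 / T ^ 2 + s = cM * t + s := by rw [htdef]; ring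
  have hNpos : 0 < cM * t + s := by rw [← hNval]; exact hN
  have hslN : s ≤ cM * t + s := by nlinarith
  have hfinal : ω.im * (cM * t + s) ≤ |k.im| * (cM * t + s) := by
    have h1 : ω.im * (cM * t + s) ≤ k.im * A := by nlinarith [hDA, hDS, hre]
    calc ω.im * (cM * t + s) ≤ k.im * A := h1
      _ ≤ |k.im| * s := hkA
      _ ≤ |k.im| * (cM * t + s) := mul_le_mul_of_nonneg_left hslN (abs_nonneg _)
  exact le_of_mul_le_mul_right hfinal hNpos
end
end

section
/- Parametric solution of the scatteringless relativistic dispersion relation: let λ > 0 and r ∈ ℝ∖{0}. Define S(r) = √( ((1−λ)/2)² + λ·arctan(r)/r ), Γ(r) = −(1+λ)/2 + S(r), and q(r) = r·( (1−λ)/2 + S(r) ). Then 1 + Γ(r) = (1−λ)/2 + S(r) > 0, q(r) = r(1+Γ(r)) ≠ 0, and Γ(r) = −λ·[ 1 − arctan(r)/q(r) ]. Equivalently, the pair (kτ, ωτ) = (q(r), iΓ(r)) satisfies the exact dispersion relation ω = −i(λ/τ)[1 − arctan(kτ/(1−iωτ))/(kτ)]. -/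
/-!
Statement 8: parametric solution of the scatteringless relativistic dispersion
relation: with `S(r) = √(((1−λ)/2)² + λ arctan(r)/r)`, `Γ(r) = −(1+λ)/2 + S(r)`,
`q(r) = r((1−λ)/2 + S(r))`, one has `1 + Γ = (1−λ)/2 + S > 0`, `q = r(1+Γ) ≠ 0`,
`Γ = −λ(1 − arctan(r)/q)`, and `(kτ, ωτ) = (q, iΓ)` satisfies the exact dispersion
relation `ω = −i(λ/τ)[1 − arctan(kτ/(1−iωτ))/(kτ)]`.
-/

noncomputable section
open Real

theorem scatteringless_parametric_solution
    (lam : ℝ) (hlam : 0 < lam) (r : ℝ) (hr : r ≠ 0) :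
    (1 + (-(1 + lam) / 2 + Real.sqrt (((1 - lam) / 2) ^ 2 + lam * Real.arctan r / r)) =
        (1 - lam) / 2 + Real.sqrt (((1 - lam) / 2) ^ 2 + lam * Real.arctan r / r)) ∧
    (0 < (1 - lam) / 2 + Real.sqrt (((1 - lam) / 2) ^ 2 + lam * Real.arctan r / r)) ∧
    (r * ((1 - lam) / 2 + Real.sqrt (((1 - lam) / 2) ^ 2 + lam * Real.arctan r / r)) ≠ 0) ∧
    (-(1 + lam) / 2 + Real.sqrt (((1 - lam) / 2) ^ 2 + lam * Real.arctan r / r) =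
      -lam * (1 - Real.arctan r /
        (r * ((1 - lam) / 2 + Real.sqrt (((1 - lam) / 2) ^ 2 + lam * Real.arctan r / r))))) ∧
    -- equivalently, (kτ, ωτ) = (q(r), iΓ(r)) satisfies the exact dispersion relation
    (Complex.I * ((-(1 + lam) / 2 +
          Real.sqrt (((1 - lam) / 2) ^ 2 + lam * Real.arctan r / r) : ℝ) : ℂ) =
      -Complex.I * (lam : ℂ) * (1 - Complex.arctan
          (((r * ((1 - lam) / 2 + Real.sqrt (((1 - lam) / 2) ^ 2 + lam * Real.arctan r / r)) : ℝ) : ℂ) /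
            (1 - Complex.I * (Complex.I * ((-(1 + lam) / 2 +
              Real.sqrt (((1 - lam) / 2) ^ 2 + lam * Real.arctan r / r) : ℝ) : ℂ)))) /
        ((r * ((1 - lam) / 2 + Real.sqrt (((1 - lam) / 2) ^ 2 + lam * Real.arctan r / r)) : ℝ) : ℂ))) := by
  set a := Real.arctan r with ha
  have har : 0 < a / r := by
    rcases lt_or_gt_of_ne hr with h | h
    · have : Real.arctan r < 0 := by
        rw [← Real.arctan_zero]; exact Real.arctan_strictMono h
      exact div_pos_of_neg_of_neg this h
    · have : 0 < Real.arctan r := by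
        rw [← Real.arctan_zero]; exact Real.arctan_strictMono h
      exact div_pos this h
  set S := Real.sqrt (((1 - lam) / 2) ^ 2 + lam * a / r) with hS
  have hmul : 0 < lam * a / r := by
    rw [mul_div_assoc]; exact mul_pos hlam har
  have hS2 : S ^ 2 = ((1 - lam) / 2) ^ 2 + lam * a / r := by
    rw [hS, Real.sq_sqrt]; positivity
  have hSgt : |(1 - lam) / 2| < S := by
    have h2 : ((1 - lam) / 2) ^ 2 < S ^ 2 := by rw [hS2]; linarith
    have hSnn : 0 ≤ S := Real.sqrt_nonneg _
    nlinarith [abs_nonneg ((1 - lam) / 2), sq_abs ((1 - lam) / 2)]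
  have hpos : 0 < (1 - lam) / 2 + S := by
    have := neg_abs_le ((1 - lam) / 2)
    linarith
  have hqne : r * ((1 - lam) / 2 + S) ≠ 0 := mul_ne_zero hr (ne_of_gt hpos)
  have ht : a / r * r = a := div_mul_cancel₀ a hr
  have key : -(1 + lam) / 2 + S =
      -lam * (1 - a / (r * ((1 - lam) / 2 + S))) := by
    have h1 : (-(1 + lam) / 2 + S) * (r * ((1 - lam) / 2 + S)) =
        -lam * (r * ((1 - lam) / 2 + S)) + lam * a := by
      linear_combination r * hS2 + lam * ht
    have h2 : a / (r * ((1 - lam) / 2 + S)) * (r * ((1 - lam) / 2 + S)) = a :=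
      div_mul_cancel₀ a hqne
    exact mul_right_cancel₀ hqne (by linear_combination h1 - lam * h2)
  refine ⟨by ring, hpos, hqne, key, ?_⟩
  have hden : (1 : ℂ) - Complex.I * (Complex.I * ((-(1 + lam) / 2 + S : ℝ) : ℂ)) =
      (((1 - lam) / 2 + S : ℝ) : ℂ) := by
    rw [← mul_assoc, Complex.I_mul_I]
    push_cast
    ring
  rw [hden]
  have harg : (((r * ((1 - lam) / 2 + S) : ℝ) : ℂ)) / (((1 - lam) / 2 + S : ℝ) : ℂ) = (r : ℂ) := by
    rw [div_eq_iff (by exact_mod_cast ne_of_gt hpos)]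
    push_cast; ring
  rw [harg, ← Complex.ofReal_arctan, ← ha]
  rw [show (-(1 + lam) / 2 + S : ℝ) = -lam * (1 - a / (r * ((1 - lam) / 2 + S))) from key]
  push_cast
  ring
end
end

section
/- Rest-frame (in)stability of the Super-Burnett truncation: let λ > 0, τ > 0, and define the Super-Burnett dispersion relation ω(k) = −i·(λτ/(3(1+λ)))·[ k² − E k⁴ ] for k ∈ ℝ, where E = ((9 + 3λ − λ²)/(15(1+λ)²))·τ². Then there exists k ∈ ℝ with Im ω(k) > 0 if and only if λ < 3(1+√5)/2; equivalently, Im ω(k) ≤ 0 for all real k if and only if λ ≥ 3(1+√5)/2. -/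
/-!
Statement 19: rest-frame (in)stability of the Super-Burnett truncation:
with `ω(k) = −i(λτ/(3(1+λ)))[k² − E k⁴]`, `E = ((9+3λ−λ²)/(15(1+λ)²))τ²`, there is
a growing Fourier mode (`Im ω(k) > 0` for some real `k`) iff `λ < 3(1+√5)/2`;
equivalently `Im ω(k) ≤ 0` for all real `k` iff `λ ≥ 3(1+√5)/2`.
-/

noncomputable section
open Real

/-- The Super-Burnett dispersion relation `ω(k)`. -/
def ωSB (lam τ k : ℝ) : ℂ :=
  -Complex.I * ((lam * τ / (3 * (1 + lam)) : ℝ) : ℂ) *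
    (((k ^ 2 - ((9 + 3 * lam - lam ^ 2) / (15 * (1 + lam) ^ 2) * τ ^ 2) * k ^ 4 : ℝ)) : ℂ)

theorem super_burnett_rest_frame_stability (lam τ : ℝ) (hlam : 0 < lam) (hτ : 0 < τ) :
    ((∃ k : ℝ, 0 < (ωSB lam τ k).im) ↔ lam < 3 * (1 + Real.sqrt 5) / 2) ∧
    ((∀ k : ℝ, (ωSB lam τ k).im ≤ 0) ↔ 3 * (1 + Real.sqrt 5) / 2 ≤ lam) := by
  set s := Real.sqrt 5 with hsdef
  have hs : s ^ 2 = 5 := Real.sq_sqrt (by norm_num)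
  have hs2 : 2 < s := by nlinarith [Real.sqrt_nonneg 5]
  set c : ℝ := lam * τ / (3 * (1 + lam)) with hcdef
  set e : ℝ := (9 + 3 * lam - lam ^ 2) / (15 * (1 + lam) ^ 2) * τ ^ 2 with hedef
  have hc : 0 < c := by
    apply div_pos (by positivity) (by positivity)
  have him : ∀ k : ℝ, (ωSB lam τ k).im = c * (e * k ^ 4 - k ^ 2) := by
    intro k
    have h1 : ωSB lam τ k = -Complex.I * (c : ℂ) * ((k ^ 2 - e * k ^ 4 : ℝ) : ℂ) := rfl
    rw [h1]
    have h2 : (-Complex.I * (c : ℂ) * ((k ^ 2 - e * k ^ 4 : ℝ) : ℂ)).im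
        = -(c * (k ^ 2 - e * k ^ 4)) := by
      simp [Complex.mul_im, Complex.mul_re, ← Complex.ofReal_pow]
    rw [h2]; ring
  have hden : (0:ℝ) < 15 * (1 + lam) ^ 2 := by positivity
  have hEiff : lam < 3 * (1 + s) / 2 ↔ 0 < e := by
    constructor
    · intro h
      have hnum : 0 < 9 + 3 * lam - lam ^ 2 := by nlinarith
      rw [hedef]; positivity
    · intro h
      have hnum : 0 < 9 + 3 * lam - lam ^ 2 := by
        by_contra hn
        push_neg at hn
        have : (9 + 3 * lam - lam ^ 2) / (15 * (1 + lam) ^ 2) ≤ 0 :=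
          div_nonpos_of_nonpos_of_nonneg hn hden.le
        nlinarith [sq_nonneg τ]
      nlinarith
  have hmain : (∃ k : ℝ, 0 < (ωSB lam τ k).im) ↔ lam < 3 * (1 + s) / 2 := by
    rw [hEiff]
    constructor
    · rintro ⟨k, hk⟩
      rw [him k] at hk
      have hk2 : 0 < e * k ^ 4 - k ^ 2 := by
        by_contra h
        push_neg at h
        nlinarith
      by_contra he
      push_neg at he
      have h4 : (0:ℝ) ≤ k ^ 4 := by positivity
      nlinarith [sq_nonneg k, mul_nonneg (neg_nonneg.mpr he) h4]
    · intro he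
      refine ⟨Real.sqrt (2 / e), ?_⟩
      have h2e : (0:ℝ) < 2 / e := by positivity
      have hk2 : Real.sqrt (2 / e) ^ 2 = 2 / e := Real.sq_sqrt h2e.le
      rw [him]
      have : e * Real.sqrt (2 / e) ^ 4 - Real.sqrt (2 / e) ^ 2 = 2 / e := by
        have h4 : Real.sqrt (2 / e) ^ 4 = (2 / e) ^ 2 := by
          rw [show (4:ℕ) = 2 * 2 from rfl, pow_mul, hk2]
        rw [h4, hk2]
        field_simp
        ring
      rw [this]
      positivity
  constructor
  · exact hmain
  · constructor
    · intro hall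
      by_contra h
      push_neg at h
      obtain ⟨k, hk⟩ := hmain.mpr h
      exact absurd (hall k) (not_le.mpr hk)
    · intro h k
      by_contra hk
      push_neg at hk
      exact absurd (hmain.mp ⟨k, hk⟩) (not_lt.mpr h)
end
end
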